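/- Let Q ≥ 1, and for each i = 1,…,Q let Xᵢ be a real normed space, let aᵢ : Xᵢ → Xᵢ → ℝ be a bilinear form with aᵢ(w,w) ≥ (1/2)‖w‖² for all w ∈ Xᵢ, and let ϖᵢ > 0 be weights. For the product space X = X₁ × ⋯ × X_Q define the weighted norm ‖w‖_ϖ := ( ∑_{i=1}^Q ϖᵢ ‖wᵢ‖² )^{1/2}. For each i let sᵢ : X → Xᵢ → ℝ be linear in each argument, and assume the coupling bound: | ∑_{i=1}^Q ϖᵢ sᵢ(w, vᵢ) | ≤ η ‖w‖_ϖ ‖v‖_ϖ for all w, v ∈ X, where 2η < 1. Suppose u⁽ⁿ⁾, u⁽ⁿ⁻¹⁾ ∈ X and u^∞ ∈ X satisfy, for each i and all v ∈ Xᵢ, the lagged iteration equations aᵢ(uᵢ⁽ⁿ⁾, v) = sᵢ(u⁽ⁿ⁻¹⁾, v) + lᵢ(v) and the coupled equations aᵢ(uᵢ^∞, v) = sᵢ(u^∞, v) + lᵢ(v), where lᵢ : Xᵢ → ℝ are fixed linear functionals. Then ‖u⁽ⁿ⁾ − u^∞‖_ϖ ≤ 2η · ‖u⁽ⁿ⁻¹⁾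 − u^∞‖_ϖ; i.e. the discrete-ordinates source iteration is a strict contraction with factor 2η in the weighted product norm. -/
import Mathlib


/-- Contraction of the discrete-ordinates source iteration (Proposition 4.4):
with per-ordinate coercive transport forms `aᵢ` (constant `1/2`), weighted
coupling bound `|∑ᵢ ϖᵢ sᵢ(w, vᵢ)| ≤ η ‖w‖_ϖ ‖v‖_ϖ` with `2η < 1`, lagged
iterates `u⁽ⁿ⁾` and the coupled solution `u∞` (with the same inflow
functionals `lᵢ`), one has `‖u⁽ⁿ⁾ − u∞‖_ϖ ≤ 2η ‖u⁽ⁿ⁻¹⁾ − u∞‖_ϖ`, where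
`‖w‖_ϖ = (∑ᵢ ϖᵢ ‖wᵢ‖²)^{1/2}`. -/
theorem discrete_source_iteration_contraction
    (Q : ℕ) (hQ : 1 ≤ Q)
    (X : Fin Q → Type*) [∀ i, NormedAddCommGroup (X i)] [∀ i, NormedSpace ℝ (X i)]
    (a : ∀ i, X i →ₗ[ℝ] X i →ₗ[ℝ] ℝ)
    (hcoer : ∀ i, ∀ w : X i, a i w w ≥ (1 / 2) * ‖w‖ ^ 2)
    (ϖ : Fin Q → ℝ) (hϖ : ∀ i, 0 < ϖ i)
    (s : ∀ i, ((j : Fin Q) → X j) →ₗ[ℝ] X i →ₗ[ℝ] ℝ)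
    (l : ∀ i, X i →ₗ[ℝ] ℝ)
    (η : ℝ) (hη : 0 ≤ η) (hsub : 2 * η < 1)
    (hcouple : ∀ w v : (j : Fin Q) → X j,
      |∑ i : Fin Q, ϖ i * s i w (v i)|
        ≤ η * Real.sqrt (∑ i : Fin Q, ϖ i * ‖w i‖ ^ 2)
            * Real.sqrt (∑ i : Fin Q, ϖ i * ‖v i‖ ^ 2))
    (un uprev uinf : (j : Fin Q) → X j)
    (hiter : ∀ i : Fin Q, ∀ v : X i, a i (un i) v = s i uprev v + l i v)
    (hsol : ∀ i : Fin Q, ∀ v : X i, a i (uinf i) v = s i uinf v + l i v) :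
    Real.sqrt (∑ i : Fin Q, ϖ i * ‖un i - uinf i‖ ^ 2)
      ≤ 2 * η * Real.sqrt (∑ i : Fin Q, ϖ i * ‖uprev i - uinf i‖ ^ 2) := by
  set e : (j : Fin Q) → X j := fun j => un j - uinf j with he
  set d : (j : Fin Q) → X j := fun j => uprev j - uinf j with hd
  have hkey : ∀ i : Fin Q, ∀ v : X i, a i (e i) v = s i d v := by
    intro i v
    have h1 := hiter i v
    have h2 := hsol i v
    have hs : s i d v = s i uprev v - s i uinf v := by
      rw [hd, show (fun j => uprev j - uinf j) = uprev - uinf from rfl, map_sub,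
        LinearMap.sub_apply]
    have ha : a i (e i) v = a i (un i) v - a i (uinf i) v := by
      rw [he]
      simp [map_sub]
    rw [hs, ha]
    linarith
  set S : ℝ := ∑ i : Fin Q, ϖ i * ‖e i‖ ^ 2 with hS
  set T : ℝ := ∑ i : Fin Q, ϖ i * ‖d i‖ ^ 2 with hT
  have hSnn : 0 ≤ S := Finset.sum_nonneg fun i _ =>
    mul_nonneg (hϖ i).le (sq_nonneg _)
  have hE : Real.sqrt S ^ 2 = S := Real.sq_sqrt hSnn
  -- coercivity summed
  have hco : (1 / 2) * S ≤ ∑ i : Fin Q, ϖ i * a i (e i) (e i) := by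
    rw [hS, Finset.mul_sum]
    refine Finset.sum_le_sum fun i _ => ?_
    have := hcoer i (e i)
    calc 1 / 2 * (ϖ i * ‖e i‖ ^ 2) = ϖ i * (1 / 2 * ‖e i‖ ^ 2) := by ring
      _ ≤ ϖ i * a i (e i) (e i) := by
          exact mul_le_mul_of_nonneg_left this (hϖ i).le
  have hsum : ∑ i : Fin Q, ϖ i * a i (e i) (e i) = ∑ i : Fin Q, ϖ i * s i d (e i) := by
    exact Finset.sum_congr rfl fun i _ => by rw [hkey i (e i)]
  have hb : ∑ i : Fin Q, ϖ i * s i d (e i) ≤ η * Real.sqrt T * Real.sqrt S :=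
    le_trans (le_abs_self _) (hcouple d e)
  have hmain : (1 / 2) * Real.sqrt S ^ 2 ≤ η * Real.sqrt T * Real.sqrt S := by
    rw [hE]; linarith [hco, hsum ▸ hco]
  rcases eq_or_lt_of_le (Real.sqrt_nonneg S) with h0 | h0
  · rw [← h0]
    positivity
  · nlinarith [hmain, h0]
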